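/- arXiv:2007.09302 — 2 statements merged into one kernel-verified Lean document; each statement's English description precedes it below -/
import Mathlib

section
/- Let E_A and E_B be commuting self-adjoint projectors with E_B E_A = E_A, and let δE_A, δE_B be self-adjoint matrices satisfying δE_A·E_A + E_A·δE_A = δE_A, δE_B·E_B + E_B·δE_B = δE_B, and δE_B·E_A + E_B·δE_A = δE_A. Then [iE_B, δE_B]·E_A + E_B·[iE_A, δE_A] = [iE_A, δE_A]. -/
open Matrix

/-!
Left-multiplying the flag relation `δE_B E_A + E_B δE_A = δE_A` by `E_B` and using `E_B² = E_B`
gives `E_B δE_B E_A = 0`. Expanding the commutators, substituting `E_B δE_A = δE_A - δE_B E_A` and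
using `E_B E_A = E_A`, `E_A² = E_A` then reduces the left-hand side to `[E_A, δE_A]`; the factor
`i` is a scalar and passes through everything.
-/

section Flag

variable {R : Type*} [Ring R] {EA EB dA dB : R}

theorem mul_mul_eq_zero_of_flag (hEB : EB * EB = EB) (htAB : dB * EA + EB * dA = dA) :
    EB * dB * EA = 0 := by
  have h := congrArg (EB * ·) htAB
  simp only [mul_add, ← mul_assoc, hEB] at h
  exact add_eq_right.mp h

theorem lie_mul_add_mul_lie_of_flag (hEA : EA * EA = EA) (hEB : EB * EB = EB)
    (hBA : EB * EA = EA) (htAB : dB * EA + EB * dA = dA) :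
    ⁅EB, dB⁆ * EA + EB * ⁅EA, dA⁆ = ⁅EA, dA⁆ := by
  have hBdA : EB * dA = dA - dB * EA := eq_sub_of_add_eq' htAB
  calc ⁅EB, dB⁆ * EA + EB * ⁅EA, dA⁆
      = EB * dB * EA - dB * (EB * EA) + (EB * EA) * dA - (EB * dA) * EA := by
        simp only [Ring.lie_def]; noncomm_ring
    _ = -(dB * EA) + EA * dA - (dA - dB * EA) * EA := by
        rw [mul_mul_eq_zero_of_flag hEB htAB, hBA, hBdA, zero_sub]
    _ = ⁅EA, dA⁆ := by
        rw [sub_mul, mul_assoc, hEA, Ring.lie_def]; noncomm_ring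

theorem smul_lie_mul_add_mul_smul_lie_of_flag {K : Type*} [CommRing K] [Algebra K R] (c : K)
    (hEA : EA * EA = EA) (hEB : EB * EB = EB)
    (hBA : EB * EA = EA) (htAB : dB * EA + EB * dA = dA) :
    ⁅c • EB, dB⁆ * EA + EB * ⁅c • EA, dA⁆ = ⁅c • EA, dA⁆ := by
  have hsmul (a b : R) : ⁅c • a, b⁆ = c • ⁅a, b⁆ := by
    simp only [Ring.lie_def, smul_mul_assoc, mul_smul_comm, smul_sub]
  rw [hsmul, hsmul, smul_mul_assoc, mul_smul_comm, ← smul_add,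
    lie_mul_add_mul_lie_of_flag hEA hEB hBA htAB]

end Flag

theorem nested_flag_complex_submanifold_computation_general (n : ℕ)
    (EA EB dA dB : Matrix (Fin n) (Fin n) ℂ)
    (hEA : EA * EA = EA) (hEB : EB * EB = EB)
    (hBA : EB * EA = EA)
    (htAB : dB * EA + EB * dA = dA) :
    ((Complex.I • EB) * dB - dB * (Complex.I • EB)) * EA +
      EB * ((Complex.I • EA) * dA - dA * (Complex.I • EA)) =
    (Complex.I • EA) * dA - dA * (Complex.I • EA) := by
  simpa only [Ring.lie_def] using
    smul_lie_mul_add_mul_smul_lie_of_flag Complex.I hEA hEB hBA htAB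

/-- The key computation showing that nested-flag orbits are complex
submanifolds: for nested commuting self-adjoint projectors E_A, E_B and
tangent vectors δE_A, δE_B satisfying the derived flag relations, one has
[iE_B, δE_B]·E_A + E_B·[iE_A, δE_A] = [iE_A, δE_A]. -/
theorem nested_flag_complex_submanifold_computation (n : ℕ)
    (EA EB dA dB : Matrix (Fin n) (Fin n) ℂ)
    (hEA : EA * EA = EA) (hEB : EB * EB = EB)
    (hEAsa : EAᴴ = EA) (hEBsa : EBᴴ = EB)
    (hBA : EB * EA = EA) (hAB : EA * EB = EA)
    (hdAsa : dAᴴ = dA) (hdBsa : dBᴴ = dB)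
    (htA : dA * EA + EA * dA = dA) (htB : dB * EB + EB * dB = dB)
    (htAB : dB * EA + EB * dA = dA) :
    ((Complex.I • EB) * dB - dB * (Complex.I • EB)) * EA +
      EB * ((Complex.I • EA) * dA - dA * (Complex.I • EA)) =
    (Complex.I • EA) * dA - dA * (Complex.I • EA) :=
  nested_flag_complex_submanifold_computation_general n EA EB dA dB hEA hEB hBA htAB
end

section
/- Let x = g λ g⁻¹ for a unitary g and λ real diagonal. Then the operator ad_{ix} on self-adjoint matrices is diagonalizable over ℂ with spectrum {i(λ_r - λ_s) : r,s diagonal entries of λ}; consequently the Lagrange interpolation formula I_x = Σ_{δ∈Δ∖{0}} i·sign(δ/i)·Π_{ε∈Δ∖{0,δ}} (ad_{ix} - ε)/(δ - ε) defines an operator on the image of ad_{ix} squaring to minus the identity. -/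
open Matrix Polynomial Module End

/-!
Conjugation by the unitary `g` carries `ad_{ix}` to `i·ad_λ`, and `i·ad_λ` multiplies the matrix
unit `E_{rs}` by `i(λ_r - λ_s)`. Hence `ad_{ix}` is diagonal in the basis `g E_{rs} gᴴ`, with
spectrum `Δ`. On an eigenvector with eigenvalue `δ ≠ 0` the Lagrange polynomial defining `I_x`
takes the value `i·sign(δ/i)`, whose square is `-1`; eigenvectors with eigenvalue `0` are
killed by `ad_{ix}`, so `I_x² = -1` on its image.
-/

section Conjugation

variable (R : Type*) {A : Type*} [CommSemiring R] [Ring A] [Algebra R A]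

def LinearEquiv.mulLeftRight (a b : A) (hba : b * a = 1) (hab : a * b = 1) : A ≃ₗ[R] A :=
  .ofLinearMap (.mulLeftRight R (a, b)) (.mulLeftRight R (b, a))
    (by ext x; simp [mul_assoc, hab, ← mul_assoc a b])
    (by ext x; simp [mul_assoc, hba, ← mul_assoc b a])

@[simp]
theorem LinearEquiv.mulLeftRight_apply (a b : A) (hba : b * a = 1) (hab : a * b = 1) (x : A) :
    LinearEquiv.mulLeftRight R a b hba hab x = a * x * b := rfl

end Conjugation

theorem conj_mul_sub_mul_conj {A : Type*} [Ring A] {a b : A} (hba : b * a = 1) (d w : A) :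
    a * d * b * (a * w * b) - a * w * b * (a * d * b) = a * (d * w - w * d) * b := by
  simp only [mul_sub, sub_mul, ← mul_assoc, mul_assoc _ b a, hba, mul_one]

theorem Matrix.diagonal_mul_single_sub_single_mul_diagonal {n R : Type*} [Fintype n]
    [DecidableEq n] [CommRing R] (d : n → R) (r s : n) (c : R) :
    diagonal d * single r s c - single r s c * diagonal d = (d r - d s) • single r s c := by
  ext i j
  simp only [sub_apply, diagonal_mul, mul_diagonal, smul_apply, single_apply, smul_eq_mul]
  split_ifs with h
  · obtain ⟨rfl, rfl⟩ := h
    ring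
  · simp

theorem Matrix.toLin_diagonal_eq_of_apply_basis {ι R M : Type*} [Fintype ι] [DecidableEq ι]
    [CommSemiring R] [AddCommMonoid M] [Module R M] {b : Basis ι R M} {μ : ι → R}
    {f : End R M} (hf : ∀ i, f (b i) = μ i • b i) : toLin b b (diagonal μ) = f :=
  b.ext fun i => by simp [toLin_self, diagonal_apply, hf]

theorem aeval_sq_mul_eq_neg_of_apply_basis {ι R M : Type*} [CommRing R] [Nontrivial R]
    [AddCommGroup M] [Module R M] {b : Basis ι R M} {μ : ι → R} {f : End R M}
    (hf : ∀ i, f (b i) = μ i • b i) {p : R[X]} (hp : ∀ i, μ i ≠ 0 → eval (μ i) p ^ 2 = -1) :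
    aeval f p ^ 2 * f = -f := by
  refine b.ext fun i => ?_
  have hev : HasEigenvector f (μ i) (b i) := ⟨mem_eigenspace_iff.mpr (hf i), b.ne_zero i⟩
  rw [← map_pow, Module.End.mul_apply, hf, map_smul, aeval_apply_of_hasEigenvector hev,
    eval_pow, LinearMap.neg_apply, hf, smul_smul]
  by_cases hμ : μ i = 0
  · simp [hμ]
  · rw [hp i hμ, mul_neg_one, neg_smul]

theorem Complex.sq_I_mul_sign_im {δ : ℂ} (hre : δ.re = 0) (hδ : δ ≠ 0) :
    (I * (Real.sign δ.im : ℂ)) ^ 2 = -1 := by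
  have him : δ.im ≠ 0 := fun h => hδ (Complex.ext hre h)
  rcases Real.sign_apply_eq_of_ne_zero _ him with h | h <;> simp [h]

/-- For x = gλg⁻¹ with g unitary and λ real diagonal, ad_{ix} is
diagonalizable with spectrum Δ = {i(λ_r - λ_s)}, and the Lagrange
interpolation formula I_x = Σ_{δ∈Δ∖{0}} i·sign(δ/i)·Π_{ε∈Δ∖{0,δ}}
(ad_{ix}-ε)/(δ-ε) defines an operator squaring to minus the identity on the
image of ad_{ix}. -/
theorem ad_diagonalizable_and_lagrange_I (n : ℕ) (lam : Fin n → ℝ)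
    (g : Matrix (Fin n) (Fin n) ℂ) (hg : gᴴ * g = 1)
    (x : Matrix (Fin n) (Fin n) ℂ)
    (hx : x = g * diagonal (fun i => (lam i : ℂ)) * gᴴ)
    (L : Module.End ℂ (Matrix (Fin n) (Fin n) ℂ))
    (hL : ∀ Z, L Z = (Complex.I • x) * Z - Z * (Complex.I • x))
    (Δ : Finset ℂ)
    (hΔ : Δ = Finset.image
      (fun p : Fin n × Fin n => Complex.I * ((lam p.1 : ℂ) - (lam p.2 : ℂ)))
      Finset.univ)
    (Ix : Module.End ℂ (Matrix (Fin n) (Fin n) ℂ))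
    (hIx : Ix = aeval L (∑ δ ∈ Δ.erase 0,
      C (Complex.I * (Real.sign δ.im : ℂ)) *
        ∏ ε ∈ (Δ.erase 0).erase δ, (C ((δ - ε)⁻¹) * (X - C ε)))) :
    (⨆ μ : ℂ, Module.End.eigenspace L μ) = ⊤ ∧
    {μ : ℂ | Module.End.HasEigenvalue L μ} = ↑Δ ∧
    ∀ Z, Ix (Ix (L Z)) = -(L Z) := by
  set μ : Fin n × Fin n → ℂ := fun p => Complex.I * ((lam p.1 : ℂ) - (lam p.2 : ℂ))
  let b := (stdBasis ℂ (Fin n) (Fin n)).map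
    (LinearEquiv.mulLeftRight ℂ g gᴴ hg (mul_eq_one_comm.mp hg))
  have hb : ∀ i, L (b i) = μ i • b i := by
    rintro ⟨r, s⟩
    simp only [b, Basis.map_apply, stdBasis_eq_single, LinearEquiv.mulLeftRight_apply, hL, hx,
      smul_mul_assoc, mul_smul_comm, ← smul_sub, conj_mul_sub_mul_conj hg,
      diagonal_mul_single_sub_single_mul_diagonal, smul_smul, μ]
  have hLb : toLin b b (diagonal μ) = L := toLin_diagonal_eq_of_apply_basis hb
  refine ⟨hLb ▸ iSup_eigenspace_toLin_diagonal_eq_top μ b, ?_, ?_⟩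
  · ext ν
    simp [← hLb, hasEigenvalue_toLin_diagonal_iff, hΔ, μ]
  · set p := Lagrange.interpolate (Δ.erase 0) id fun δ => Complex.I * (Real.sign δ.im : ℂ)
    -- the polynomial in `hIx` is `Lagrange.interpolate` unfolded
    have hIxp : Ix = aeval L p := hIx
    have hp : ∀ i, μ i ≠ 0 → eval (μ i) p ^ 2 = -1 := fun i hi => by
      have hmem : μ i ∈ Δ.erase 0 :=
        Finset.mem_erase.mpr ⟨hi, hΔ ▸ Finset.mem_image_of_mem μ (Finset.mem_univ i)⟩
      rw [← id_eq (μ i), Lagrange.eval_interpolate_at_node _ (Set.injOn_id _) hmem]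
      exact Complex.sq_I_mul_sign_im (by simp [μ]) hi
    intro Z
    simpa [hIxp, pow_two] using LinearMap.congr_fun (aeval_sq_mul_eq_neg_of_apply_basis hb hp) Z
end
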